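/- arXiv:2511.21899 — 4 statements merged into one kernel-verified Lean document; each statement's English description precedes it below -/
import Mathlib

section
/- For every integer n ≥ 2 there exists a constant C = C(n) > 0 such that every number field K of degree n contains an element α ∈ 𝒪_K which is irrational and satisfies ‖α‖ ≤ C · D_K^{1/(2(n−1))}. -/
/-!
Minkowski's convex body theorem. Put `t = 8 D^{1/(2(n-1))}`, so that `t^{n-1} = 8^{n-1} √D`
exceeds the Minkowski bound `2^n √D` of `𝓞 K`. Fix an infinite place `w₀` and consider the body
where the real part at `w₀` is less than `1` (the absolute value, if `w₀` is real) and all other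
coordinates, including the imaginary part at `w₀`, are less than `t`: its volume is at least
`t^{n-1}`, so it contains a nonzero `α ∈ 𝓞 K`. A nonzero rational integer has real part at
least `1` in absolute value, so `α` is irrational, and `|σ α| < 1 + t` for every embedding `σ`,
whence `‖α‖ ≤ n (1 + t) ≤ 9 n D^{1/(2(n-1))}`.
-/

open NumberField

/-- `‖x‖ = ∑_σ |σ(x)|`, the sum running over all field embeddings `σ : K → ℂ`. -/
noncomputable def embNorm (K : Type*) [Field K] [NumberField K] (x : K) : ℝ :=
  ∑ σ : K →+* ℂ, ‖σ x‖

open NumberField.InfinitePlace NumberField.mixedEmbedding MeasureTheory Module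
open scoped NNReal ENNReal

theorem NNReal.rpow_one_div_two_mul_pow (x : ℝ≥0) {k : ℕ} (hk : k ≠ 0) :
    (x ^ (1 / (2 * (k : ℝ)))) ^ k = NNReal.sqrt x := by
  rw [← NNReal.rpow_natCast, ← NNReal.rpow_mul, NNReal.sqrt_eq_rpow]
  congr 1
  field_simp

theorem embNorm_le_of_forall_lt {K : Type*} [Field K] [NumberField K] {x : K} {B : ℝ}
    (h : ∀ w : InfinitePlace K, w x < B) :
    embNorm K x ≤ finrank ℚ K * B := by
  calc embNorm K x ≤ ∑ _σ : K →+* ℂ, B :=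
        Finset.sum_le_sum fun σ _ ↦ (h (InfinitePlace.mk σ)).le
    _ = finrank ℚ K * B := by
        rw [Finset.sum_const, Finset.card_univ, Embeddings.card K ℂ, nsmul_eq_mul]

namespace NumberField

variable {K : Type*} [Field K] [NumberField K]

theorem RingOfIntegers.coe_notMem_range_algebraMap_of_abs_re_lt_one {a : 𝓞 K} (ha : a ≠ 0)
    {σ : K →+* ℂ} (hσ : |(σ a).re| < 1) : (a : K) ∉ Set.range (algebraMap ℚ K) := by
  rintro ⟨q, hq⟩
  have hq_int : IsIntegral ℤ q :=
    (isIntegral_algebraMap_iff (algebraMap ℚ K).injective).mp (hq ▸ a.isIntegral_coe)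
  obtain ⟨m, rfl⟩ := IsIntegrallyClosed.isIntegral_iff.mp hq_int
  have hm : (a : K) = m := by rw [← hq]; simp
  rw [hm, map_intCast, Complex.intCast_re, ← Int.cast_abs, ← Int.cast_one, Int.cast_lt,
    Int.abs_lt_one_iff] at hσ
  exact ha (RingOfIntegers.coe_eq_zero_iff.mp (show (a : K) = 0 by rw [hm, hσ, Int.cast_zero]))

theorem InfinitePlace.mult_le_finrank (w : InfinitePlace K) : mult w ≤ finrank ℚ K :=
  sum_mult_eq (K := K) ▸ Finset.single_le_sum (fun _ _ ↦ Nat.zero_le _) (Finset.mem_univ w)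

open scoped Classical in
theorem InfinitePlace.prod_ite_pow_mult (w₀ : InfinitePlace K) (x t : ℝ≥0) :
    ∏ w, (if w = w₀ then x else t) ^ mult w = x ^ mult w₀ * t ^ (finrank ℚ K - mult w₀) := by
  rw [← Finset.mul_prod_erase _ _ (Finset.mem_univ w₀), if_pos rfl,
    Finset.prod_congr rfl fun w hw ↦ by rw [if_neg (Finset.ne_of_mem_erase hw)],
    Finset.prod_pow_eq_pow_sum, ← sum_mult_eq, ← Finset.add_sum_erase _ _ (Finset.mem_univ w₀),
    Nat.add_sub_cancel_left]

namespace mixedEmbedding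

theorem minkowskiBound_one_le :
    minkowskiBound K ↑1 ≤ ↑(2 ^ finrank ℚ K * NNReal.sqrt ‖discr K‖₊) := by
  rw [minkowskiBound, volume_fundamentalDomain_fractionalIdealLatticeBasis,
    volume_fundamentalDomain_latticeBasis, mixedEmbedding.finrank]
  simp only [Units.val_one, FractionalIdeal.absNorm_one, Rat.cast_one, ENNReal.ofReal_one,
    one_mul, ENNReal.coe_mul, ENNReal.coe_pow]
  calc (2 : ℝ≥0∞)⁻¹ ^ nrComplexPlaces K * NNReal.sqrt ‖discr K‖₊ * 2 ^ finrank ℚ K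
      ≤ 1 * NNReal.sqrt ‖discr K‖₊ * 2 ^ finrank ℚ K := by
        gcongr
        exact pow_le_one₀ (by simp) (ENNReal.inv_le_one.mpr one_le_two)
    _ = _ := by rw [one_mul, mul_comm]; norm_cast

open scoped Classical in
theorem exists_ne_zero_mem_ringOfIntegers_lt_of_isReal {w₀ : InfinitePlace K} (hw₀ : IsReal w₀)
    {t : ℝ≥0} (ht : minkowskiBound K ↑1 < t ^ (finrank ℚ K - 1)) :
    ∃ a : 𝓞 K, a ≠ 0 ∧ w₀ a < 1 ∧ ∀ w : InfinitePlace K, w a < max 1 t := by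
  have hvol : minkowskiBound K ↑1 < volume (convexBodyLT K fun w ↦ if w = w₀ then 1 else t) := by
    rw [convexBodyLT_volume, prod_ite_pow_mult, mult, if_pos hw₀, one_pow, one_mul]
    exact ht.trans_le (le_mul_of_one_le_left' (by exact_mod_cast one_le_convexBodyLTFactor K))
  obtain ⟨a, ha, hlt⟩ := exists_ne_zero_mem_ringOfIntegers_lt K hvol
  refine ⟨a, ha, by simpa using hlt w₀, fun w ↦ (hlt w).trans_le ?_⟩
  split_ifs <;> simp

open scoped Classical in
theorem exists_ne_zero_mem_ringOfIntegers_lt_of_isComplex {w₀ : InfinitePlace K}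
    (hw₀ : IsComplex w₀) {t : ℝ≥0} (ht : minkowskiBound K ↑1 < t ^ (finrank ℚ K - 1)) :
    ∃ a : 𝓞 K, a ≠ 0 ∧ |(w₀.embedding a).re| < 1 ∧ ∀ w : InfinitePlace K, w a < 1 + t := by
  have hmult : mult w₀ = 2 := by rw [mult, if_neg (not_isReal_iff_isComplex.mpr hw₀)]
  have hn : 2 ≤ finrank ℚ K := hmult ▸ mult_le_finrank w₀
  have hvol : minkowskiBound K ↑1 <
      volume (convexBodyLT' K (fun w ↦ if w = w₀ then NNReal.sqrt t else t) ⟨w₀, hw₀⟩) := by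
    rw [convexBodyLT'_volume, prod_ite_pow_mult, hmult, NNReal.sq_sqrt, ← pow_succ',
      show finrank ℚ K - 2 + 1 = finrank ℚ K - 1 by omega]
    exact ht.trans_le (le_mul_of_one_le_left' (by exact_mod_cast one_le_convexBodyLT'Factor K))
  obtain ⟨a, ha, hlt, hre, him⟩ := exists_ne_zero_mem_ringOfIntegers_lt' K ⟨w₀, hw₀⟩ hvol
  refine ⟨a, ha, hre, fun w ↦ ?_⟩
  by_cases hw : w = w₀
  · subst hw
    rw [if_pos rfl, ← NNReal.coe_pow, NNReal.sq_sqrt] at him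
    calc w a = ‖w.embedding a‖ := (norm_embedding_eq w _).symm
      _ ≤ |(w.embedding a).re| + |(w.embedding a).im| := Complex.norm_le_abs_re_add_abs_im _
      _ < 1 + t := add_lt_add hre him
  · have hw_lt := hlt w hw
    rw [if_neg hw] at hw_lt
    linarith

theorem exists_ne_zero_mem_ringOfIntegers_abs_re_lt_one {t : ℝ≥0}
    (ht : minkowskiBound K ↑1 < t ^ (finrank ℚ K - 1)) :
    ∃ a : 𝓞 K, a ≠ 0 ∧ (∃ σ : K →+* ℂ, |(σ a).re| < 1) ∧ ∀ w : InfinitePlace K, w a < 1 + t := by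
  obtain ⟨w₀⟩ := (inferInstance : Nonempty (InfinitePlace K))
  rcases isReal_or_isComplex w₀ with hw₀ | hw₀
  · obtain ⟨a, ha, hw₀a, hlt⟩ := exists_ne_zero_mem_ringOfIntegers_lt_of_isReal hw₀ ht
    refine ⟨a, ha, ⟨w₀.embedding, ?_⟩, fun w ↦ (hlt w).trans_le ?_⟩
    · exact (Complex.abs_re_le_norm _).trans_lt ((norm_embedding_eq w₀ _).trans_lt hw₀a)
    · exact max_le (le_add_of_nonneg_right t.coe_nonneg) (le_add_of_nonneg_left zero_le_one)
  · obtain ⟨a, ha, hre, hlt⟩ := exists_ne_zero_mem_ringOfIntegers_lt_of_isComplex hw₀ ht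
    exact ⟨a, ha, ⟨w₀.embedding, hre⟩, hlt⟩

theorem minkowskiBound_one_lt_eight_mul_rpow (hK : 2 ≤ finrank ℚ K) :
    minkowskiBound K ↑1 <
      ↑((8 * ‖discr K‖₊ ^ (1 / (2 * ((finrank ℚ K : ℝ) - 1)))) ^ (finrank ℚ K - 1)) := by
  have hcast : (finrank ℚ K : ℝ) - 1 = (finrank ℚ K - 1 : ℕ) := by
    rw [Nat.cast_sub (by omega), Nat.cast_one]
  rw [hcast, mul_pow, NNReal.rpow_one_div_two_mul_pow _ (by omega)]
  refine minkowskiBound_one_le.trans_lt (ENNReal.coe_lt_coe.mpr ?_)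
  have h8 : (2 : ℝ≥0) ^ finrank ℚ K < 8 ^ (finrank ℚ K - 1) := by
    rw [show (8 : ℝ≥0) = 2 ^ 3 by norm_num, ← pow_mul]
    exact pow_lt_pow_right₀ one_lt_two (by omega)
  exact mul_lt_mul_of_pos_right h8 (NNReal.sqrt_pos.mpr (by simpa using discr_ne_zero K))

end mixedEmbedding
end NumberField

/-- For every integer `n ≥ 2` there exists a constant `C = C(n) > 0` such that
every number field `K` of degree `n` contains an element `α ∈ 𝒪_K` which is irrational and
satisfies `‖α‖ ≤ C · D_K^{1/(2(n−1))}`. -/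
theorem stmt2 (n : ℕ) (hn : 2 ≤ n) :
    ∃ C : ℝ, 0 < C ∧
      ∀ (K : Type) [Field K] [NumberField K],
        Module.finrank ℚ K = n →
        ∃ α : 𝓞 K,
          (algebraMap (𝓞 K) K α) ∉ Set.range (algebraMap ℚ K) ∧
          embNorm K (algebraMap (𝓞 K) K α) ≤
            C * (|discr K| : ℝ) ^ ((1 : ℝ) / (2 * ((n : ℝ) - 1))) := by
  refine ⟨9 * n, by positivity, fun K _ _ hK ↦ ?_⟩
  subst hK
  obtain ⟨a, ha, ⟨σ, hσ⟩, hlt⟩ :=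
    exists_ne_zero_mem_ringOfIntegers_abs_re_lt_one (minkowskiBound_one_lt_eight_mul_rpow hn)
  refine ⟨a, RingOfIntegers.coe_notMem_range_algebraMap_of_abs_re_lt_one ha hσ,
    (embNorm_le_of_forall_lt hlt).trans ?_⟩
  have hn' : (2 : ℝ) ≤ finrank ℚ K := by exact_mod_cast hn
  have hs : 1 ≤ (|discr K| : ℝ) ^ ((1 : ℝ) / (2 * ((finrank ℚ K : ℝ) - 1))) :=
    Real.one_le_rpow (by exact_mod_cast Int.one_le_abs (discr_ne_zero K))
      (one_div_nonneg.mpr (by linarith))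
  push_cast [NNReal.coe_rpow, coe_nnnorm, Int.norm_eq_abs]
  nlinarith
end

section
/- Let K ⊆ ℂ be a number field of degree n over ℚ, let L ⊆ ℂ be the Galois closure of K over ℚ, let σ, τ : K → ℂ be two distinct ℚ-algebra embeddings, and let λ ∈ L with λ ≠ 0 and λ ≠ 1. Then the set V_{σ,τ,λ} := { x ∈ K : (1 − λ)·x = σ(x) − λ·τ(x) } (the equation holding in ℂ) is a ℚ-linear subspace of K satisfying 3·dim_ℚ(V_{σ,τ,λ}) ≤ 2n. -/
/-!
Let `A` be the space of `ℚ`-linear maps `K → ℂ` vanishing on `V`; it has `ℂ`-dimension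
`n - dim V`, and the `n` embeddings `K → ℂ` form a `ℂ`-basis of all `ℚ`-linear maps `K → ℂ`.
Each embedding `ρ` extends to some `h : L → ℂ`, and applying `h` to the defining relation of `V`
shows that `(1 - h λ) ρ - h ∘ σ + h λ (h ∘ τ)` lies in `A`. Its coordinate at `ρ` is nonzero
(because `h λ ≠ 0, 1` and `h ∘ σ ≠ h ∘ τ`) and it has at most three nonzero coordinates.
The supports of a basis of the span of these maps therefore cover all `n` embeddings, at most
three at a time, so `n ≤ 3 (n - dim V)`.
-/

open Module LinearMap Finset

namespace Module.Basis

variable {ι R W : Type*} [AddCommGroup W]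

theorem support_repr_subset_biUnion_of_mem_span [Semiring R] [Module R W] [DecidableEq ι]
    (B : Basis ι R W) {s : Finset W} {v : W} (hv : v ∈ Submodule.span R (s : Set W)) :
    (B.repr v).support ⊆ s.biUnion fun u => (B.repr u).support := by
  obtain ⟨c, -, rfl⟩ := Submodule.mem_span_finset.mp hv
  rw [map_sum]
  refine Finsupp.support_finsetSum.trans (biUnion_mono fun u _ => ?_)
  rw [map_smul]
  exact Finsupp.support_smul

theorem card_le_mul_finrank_of_forall_exists_repr_ne_zero [DivisionRing R] [Module R W]
    [Fintype ι] (B : Basis ι R W) (A : Submodule R W) (k : ℕ)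
    (h : ∀ i, ∃ w ∈ A, B.repr w i ≠ 0 ∧ #(B.repr w).support ≤ k) :
    Fintype.card ι ≤ k * finrank R A := by
  classical
  choose w hwA hwi hwk using h
  have : FiniteDimensional R W := B.finiteDimensional_of_finite
  obtain ⟨t, hts, hspan, hli⟩ := exists_linearIndependent R (Set.range w)
  lift t to Finset W using hli.setFinite
  have hcard : #t ≤ finrank R A := by
    rw [← finrank_span_finset_eq_card hli]
    exact Submodule.finrank_mono (Submodule.span_le.2 fun u hu => by
      obtain ⟨i, rfl⟩ := hts hu
      exact hwA i)
  have hcover : (univ : Finset ι) ⊆ t.biUnion fun u => (B.repr u).support := fun i _ =>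
    B.support_repr_subset_biUnion_of_mem_span (hspan ▸ Submodule.subset_span ⟨i, rfl⟩)
      (Finsupp.mem_support_iff.2 (hwi i))
  calc Fintype.card ι = #(univ : Finset ι) := rfl
    _ ≤ #(t.biUnion fun u => (B.repr u).support) := card_le_card hcover
    _ ≤ ∑ u ∈ t, #(B.repr u).support := card_biUnion_le
    _ ≤ ∑ _u ∈ t, k := sum_le_sum fun u hu => by
      obtain ⟨i, rfl⟩ := hts hu
      exact hwk i
    _ = k * #t := by rw [sum_const, smul_eq_mul, mul_comm]
    _ ≤ k * finrank R A := Nat.mul_le_mul_left k hcard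

end Module.Basis

theorem Submodule.finrank_add_finrank_ker_lcomp_subtype {F M : Type*} (Ω : Type*) [Field F]
    [Field Ω] [Algebra F Ω] [AddCommGroup M] [Module F M] [FiniteDimensional F M]
    (V : Submodule F M) :
    finrank F V + finrank Ω (ker (lcomp Ω Ω V.subtype)) = finrank F M := by
  have hsurj : Function.Surjective (lcomp Ω Ω V.subtype) := fun g =>
    (LinearMap.exists_extend g).imp fun _ => id
  have := (lcomp Ω Ω V.subtype).finrank_range_add_finrank_ker
  rwa [range_eq_top.2 hsurj, finrank_top, finrank_linearMap_self, finrank_linearMap_self] at this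

namespace Finsupp

variable {ι R : Type*} [DecidableEq ι]

theorem card_support_single_sub_single_add_single_le [AddCommGroup R] (i j k : ι) (a b c : R) :
    #(single i a - single j b + single k c).support ≤ 3 := by
  refine (card_le_card (t := {i, j, k}) fun x hx => ?_).trans card_le_three
  contrapose! hx
  simp only [mem_insert, mem_singleton, not_or] at hx
  simp [Ne.symm hx.1, Ne.symm hx.2.1, Ne.symm hx.2.2]

theorem single_sub_single_add_single_apply_ne_zero [Ring R] [Nontrivial R] {c : R}
    (hc0 : c ≠ 0) (hc1 : c ≠ 1) {i j k : ι} (hjk : j ≠ k) :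
    (single i (1 - c) - single j 1 + single k c : ι →₀ R) i ≠ 0 := by
  simp only [add_apply, sub_apply, single_apply]
  rcases eq_or_ne j i with rfl | hji
  · simpa [hjk.symm] using hc0
  rcases eq_or_ne k i with rfl | hki
  · simp [hji]
  · simpa [hji, hki, sub_eq_zero] using hc1.symm

end Finsupp

section Embeddings

variable (F K Ω : Type*) [Field F] [Field K] [Field Ω] [Algebra F K] [Algebra F Ω]
  [FiniteDimensional F K] [Algebra.IsSeparable F K] [IsAlgClosed Ω]

noncomputable def embeddingsBasis : Basis (K →ₐ[F] Ω) Ω (K →ₗ[F] Ω) :=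
  basisOfLinearIndependentOfCardEqFinrank' _ (linearIndependent_toLinearMap F K Ω)
    (by rw [AlgHom.card, finrank_linearMap_self])

variable {F K Ω}

@[simp]
theorem embeddingsBasis_apply (ρ : K →ₐ[F] Ω) : embeddingsBasis F K Ω ρ = ρ.toLinearMap :=
  congrFun (coe_basisOfLinearIndependentOfCardEqFinrank' ..) ρ

end Embeddings

section RelationSpace

variable {F K L : Type*} [Field F] [Field K] [Field L] [Algebra F K] [Algebra F L] [Algebra K L]
  [IsScalarTower F K L]

/-- The paper's `V_{σ,τ,λ}`, with `K` viewed inside `L` through `algebraMap K L`. -/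
noncomputable def relationSpace (lam : L) (σ τ : K →ₐ[F] L) : Submodule F K :=
  ker ((1 - lam) • (IsScalarTower.toAlgHom F K L).toLinearMap - σ.toLinearMap +
    lam • τ.toLinearMap)

theorem mem_relationSpace {lam : L} {σ τ : K →ₐ[F] L} {x : K} :
    x ∈ relationSpace lam σ τ ↔ (1 - lam) * algebraMap K L x = σ x - lam * τ x := by
  simp only [relationSpace, mem_ker, LinearMap.add_apply, LinearMap.sub_apply,
    LinearMap.smul_apply, AlgHom.toLinearMap_apply, IsScalarTower.coe_toAlgHom', smul_eq_mul]
  constructor <;> intro h <;> linear_combination h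

variable {lam : L} {σ τ : K →ₐ[F] L} [FiniteDimensional F K] [Algebra.IsSeparable F K]
  [Algebra.IsAlgebraic K L]

theorem exists_mem_ker_lcomp_relationSpace_repr_ne_zero (Ω : Type*) [Field Ω] [Algebra F Ω]
    [IsAlgClosed Ω]
    (hστ : σ ≠ τ) (hlam0 : lam ≠ 0) (hlam1 : lam ≠ 1) (ρ : K →ₐ[F] Ω) :
    ∃ w ∈ ker (lcomp Ω Ω (relationSpace lam σ τ).subtype),
      (embeddingsBasis F K Ω).repr w ρ ≠ 0 ∧ #((embeddingsBasis F K Ω).repr w).support ≤ 3 := by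
  classical
  obtain ⟨h, rfl⟩ := IsAlgClosed.surjective_domRestrict_of_isAlgebraic (K := F) (L := K) (E := L)
    (M := Ω) ρ
  have hc0 : h lam ≠ 0 := (map_ne_zero h).2 hlam0
  have hc1 : h lam ≠ 1 := fun e => hlam1 (h.injective (e.trans (map_one h).symm))
  have hστ' : h.comp σ ≠ h.comp τ := fun e =>
    hστ (AlgHom.ext fun x => h.injective (AlgHom.congr_fun e x))
  set B := embeddingsBasis F K Ω
  refine ⟨(1 - h lam) • B (h.domRestrict K) - B (h.comp σ) + h lam • B (h.comp τ), ?_, ?_⟩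
  · ext ⟨v, hv⟩
    have := congrArg h (mem_relationSpace.1 hv)
    simp only [map_mul, map_sub, map_one, AlgHom.domRestrict, embeddingsBasis_apply,
      AlgHom.comp_toLinearMap, map_add, map_smul, LinearMap.add_apply, LinearMap.sub_apply,
      LinearMap.smul_apply, lcomp_apply, Submodule.subtype_apply, coe_comp,
      AlgHom.coe_toLinearMap, IsScalarTower.coe_toAlgHom', Function.comp_apply, smul_eq_mul,
      LinearMap.zero_apply, B] at this ⊢
    linear_combination this
  · have hrepr :
        B.repr ((1 - h lam) • B (h.domRestrict K) - B (h.comp σ) + h lam • B (h.comp τ)) =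
          .single (h.domRestrict K) (1 - h lam) - .single (h.comp σ) 1 +
            .single (h.comp τ) (h lam) := by
      simp [B.repr_self, Finsupp.smul_single]
    rw [hrepr]
    exact ⟨Finsupp.single_sub_single_add_single_apply_ne_zero hc0 hc1 hστ',
      Finsupp.card_support_single_sub_single_add_single_le ..⟩

theorem three_mul_finrank_relationSpace_le (hστ : σ ≠ τ) (hlam0 : lam ≠ 0) (hlam1 : lam ≠ 1) :
    3 * finrank F (relationSpace lam σ τ) ≤ 2 * finrank F K := by
  have hdim := (relationSpace lam σ τ).finrank_add_finrank_ker_lcomp_subtype (AlgebraicClosure L)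
  have hcard :=
    (embeddingsBasis F K (AlgebraicClosure L)).card_le_mul_finrank_of_forall_exists_repr_ne_zero
      _ 3 (exists_mem_ker_lcomp_relationSpace_repr_ne_zero _ hστ hlam0 hlam1)
  rw [AlgHom.card] at hcard
  omega

end RelationSpace

/-- Let `K ⊆ ℂ` be a number field of degree `n` over `ℚ`, let `L ⊆ ℂ` be the
Galois closure of `K` over `ℚ`, let `σ, τ : K → ℂ` be two distinct `ℚ`-algebra embeddings, and
let `λ ∈ L` with `λ ≠ 0` and `λ ≠ 1`. Then the set
`V = { x ∈ K : (1 − λ)·x = σ(x) − λ·τ(x) }` is a `ℚ`-linear subspace of `K` satisfying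
`3·dim_ℚ V ≤ 2n`. -/
theorem stmt8 (n : ℕ) (K : IntermediateField ℚ ℂ) [FiniteDimensional ℚ K]
    (hn : Module.finrank ℚ K = n)
    (σ τ : K →ₐ[ℚ] ℂ) (hστ : σ ≠ τ)
    (lam : ℂ) (hlam : lam ∈ IntermediateField.normalClosure ℚ K ℂ) (hlam0 : lam ≠ 0) (hlam1 : lam ≠ 1) :
    ∃ V : Submodule ℚ K,
      (V : Set K) = {x : K | (1 - lam) * (x : ℂ) = σ x - lam * τ x} ∧
      3 * Module.finrank ℚ V ≤ 2 * n := by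
  let e := normalClosure.algHomEquiv ℚ K ℂ
  let lam' : IntermediateField.normalClosure ℚ K ℂ := ⟨lam, hlam⟩
  refine ⟨relationSpace lam' (e.symm σ) (e.symm τ), ?_, ?_⟩
  · ext x
    simp only [SetLike.mem_coe, mem_relationSpace, Set.mem_ofPred_eq, Subtype.ext_iff]
    rfl
  · have : Algebra.IsAlgebraic K (IntermediateField.normalClosure ℚ K ℂ) :=
      Algebra.IsAlgebraic.tower_top (K := ℚ) K
    exact hn ▸ three_mul_finrank_relationSpace_le (e.symm.injective.ne hστ)
      (mt (congrArg Subtype.val) hlam0) (mt (congrArg Subtype.val) hlam1)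
end

section
/- There exists an absolute constant C > 0 with the following property. Let 𝒫 be a finite set of odd primes with P := #𝒫 ≥ 1, and let ω : ℕ → ℝ_{≥0} be a function such that ω(0) = 0 and ω(m) = 0 for every m > e^P. Then Σ_{k ≥ 1} ω(k²) ≤ C · ( (1/P) Σ_{m ≥ 1} ω(m) + (1/P²) Σ_{p,q ∈ 𝒫, p ≠ q} | Σ_{m ≥ 1} ω(m) · (m / pq) | ), where (m / pq) denotes the Jacobi symbol. -/
open Finset

set_option maxHeartbeats 1000000

/-- the square sieve. There exists an absolute constant `C > 0` with the
following property. Let `P` be a finite set of odd primes with `P := #P ≥ 1`, and let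
`ω : ℕ → ℝ_{≥0}` be a function such that `ω(0) = 0` and `ω(m) = 0` for every `m > e^P`. Then
`Σ_{k} ω(k²) ≤ C · ( (1/P) Σ_m ω(m) + (1/P²) Σ_{p ≠ q ∈ P} | Σ_m ω(m)·(m/pq) | )`,
where `(m/pq)` is the Jacobi symbol. -/
theorem stmt9 :
    ∃ C : ℝ, 0 < C ∧
      ∀ (P : Finset ℕ), (∀ p ∈ P, p.Prime ∧ Odd p) → 1 ≤ P.card →
      ∀ ω : ℕ → ℝ, (∀ m, 0 ≤ ω m) → ω 0 = 0 →
        (∀ m : ℕ, Real.exp (P.card : ℝ) < (m : ℝ) → ω m = 0) →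
        ∑' k : ℕ, ω (k ^ 2) ≤
          C * ((1 / (P.card : ℝ)) * ∑' m : ℕ, ω m +
            (1 / ((P.card : ℝ)) ^ 2) *
              ∑ p ∈ P, ∑ q ∈ P.erase p,
                |∑' m : ℕ, ω m * (jacobiSym (m : ℤ) (p * q) : ℝ)|) := by
  refine ⟨4, by norm_num, ?_⟩
  intro P hP hPcard ω hω0 hω00 hωbig
  have hPpos : (0 : ℝ) < (P.card : ℝ) := by exact_mod_cast hPcard
  set N : ℕ := ⌈Real.exp (P.card : ℝ)⌉₊ + 1 with hNdef
  have hN : Real.exp (P.card : ℝ) < (N : ℝ) := by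
    calc Real.exp (P.card : ℝ) ≤ (⌈Real.exp (P.card : ℝ)⌉₊ : ℝ) := Nat.le_ceil _
    _ < (N : ℝ) := by exact_mod_cast Nat.lt_succ_self _
  have hN1 : 1 ≤ N := Nat.le_add_left 1 _
  have hωN : ∀ m, N ≤ m → ω m = 0 := fun m hm =>
    hωbig m (lt_of_lt_of_le hN (by exact_mod_cast hm))
  set M : ℕ := N ^ 2 with hMdef
  have hNM : N ≤ M := by
    rw [hMdef]; nlinarith [hN1]
  -- tsum conversions
  have h1 : ∑' m : ℕ, ω m = ∑ m ∈ range M, ω m := by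
    refine tsum_eq_sum fun m hm => hωN m ?_
    exact le_trans hNM (le_of_not_gt (fun h => hm (mem_range.mpr h)))
  have h2 : ∀ b : ℕ, ∑' m : ℕ, ω m * (jacobiSym (m : ℤ) b : ℝ)
      = ∑ m ∈ range M, ω m * (jacobiSym (m : ℤ) b : ℝ) := by
    intro b
    refine tsum_eq_sum fun m hm => ?_
    rw [hωN m (le_trans hNM (le_of_not_gt (fun h => hm (mem_range.mpr h)))), zero_mul]
  have h3 : ∑' k : ℕ, ω (k ^ 2) = ∑ k ∈ range N, ω (k ^ 2) := by
    refine tsum_eq_sum fun k hk => ?_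
    have hk' : N ≤ k := le_of_not_gt (fun h => hk (mem_range.mpr h))
    exact hωN _ (le_trans hk' (Nat.le_self_pow two_ne_zero k))
  -- the key quantity
  set T : ℕ → ℝ := fun m => ∑ p ∈ P, (jacobiSym (m : ℤ) p : ℝ) with hT
  set S : ℝ := ∑ m ∈ range M, ω m * T m ^ 2 with hS
  -- lower bound for T on squares in the support
  have key : ∀ k ∈ range N, ω (k ^ 2) * (P.card : ℝ) ^ 2 ≤ 4 * (ω (k ^ 2) * T (k ^ 2) ^ 2) := by
    intro k _
    rcases eq_or_ne (ω (k ^ 2)) 0 with h0 | h0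
    · simp [h0]
    have hk0 : k ≠ 0 := by rintro rfl; simp [hω00] at h0
    have hksq : ((k : ℝ)) ^ 2 ≤ Real.exp (P.card : ℝ) := by
      by_contra h
      push_neg at h
      exact h0 (hωbig (k ^ 2) (by push_cast; linarith))
    -- count prime divisors
    set A : Finset ℕ := P.filter (· ∣ k) with hA
    have hAsub : ∀ p ∈ A, p ∣ k := fun p hp => (mem_filter.mp hp).2
    have hAprime : ∀ p ∈ A, Prime p := fun p hp =>
      (hP p (mem_filter.mp hp).1).1.prime
    have hprod : ∏ p ∈ A, p ∣ k := Finset.prod_primes_dvd k hAprime hAsub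
    have h3A : ∀ p ∈ A, 3 ≤ p := by
      intro p hp
      obtain ⟨hpp, hpo⟩ := hP p (mem_filter.mp hp).1
      have h2le := hpp.two_le
      have hne2 : p ≠ 2 := by rintro rfl; exact absurd hpo (by decide)
      omega
    have h3r : 3 ^ A.card ≤ k := by
      calc 3 ^ A.card ≤ ∏ p ∈ A, p := Finset.pow_card_le_prod A _ 3 h3A
      _ ≤ k := Nat.le_of_dvd (Nat.pos_of_ne_zero hk0) hprod
    -- r ≤ P/2
    have hr : (A.card : ℝ) ≤ (P.card : ℝ) / 2 := by
      have h9 : (9 : ℝ) ^ A.card ≤ Real.exp (P.card : ℝ) := by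
        have h3k : ((3 : ℝ)) ^ A.card ≤ (k : ℝ) := by exact_mod_cast h3r
        have h3nn : (0:ℝ) ≤ (3:ℝ) ^ A.card := by positivity
        calc (9 : ℝ) ^ A.card = ((3:ℝ)^2) ^ A.card := by norm_num
        _ = ((3:ℝ) ^ A.card) ^ 2 := by rw [← pow_mul, ← pow_mul, mul_comm]
        _ ≤ (k : ℝ) ^ 2 := pow_le_pow_left₀ h3nn h3k 2
        _ ≤ _ := hksq
      have hexp2 : Real.exp 2 < 9 := by
        have h1 := Real.exp_one_lt_d9
        have : Real.exp 2 = Real.exp 1 ^ 2 := by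
          rw [← Real.exp_nat_mul]; norm_num
        nlinarith [Real.exp_pos 1]
      have hle : Real.exp (2 * (A.card : ℝ)) ≤ Real.exp (P.card : ℝ) := by
        calc Real.exp (2 * (A.card : ℝ)) = Real.exp 2 ^ A.card := by
              rw [← Real.exp_nat_mul]; ring_nf
        _ ≤ (9:ℝ) ^ A.card := pow_le_pow_left₀ (Real.exp_pos 2).le hexp2.le _
        _ ≤ _ := h9
      have := Real.exp_le_exp.mp hle
      linarith
    -- T(k²) = #(P \ A)
    have hjac : ∀ p ∈ P, (jacobiSym ((k ^ 2 : ℕ) : ℤ) p : ℝ) = if p ∣ k then 0 else 1 := by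
      intro p hp
      obtain ⟨hpp, _⟩ := hP p hp
      have hcast : ((k ^ 2 : ℕ) : ℤ) = (k : ℤ) ^ 2 := by push_cast; ring
      rw [hcast, jacobiSym.pow_left]
      by_cases hd : p ∣ k
      · have hz : jacobiSym (k : ℤ) p = 0 := by
          rw [jacobiSym.eq_zero_iff]
          refine ⟨hpp.ne_zero, ?_⟩
          rw [Int.gcd_natCast_natCast]
          intro h
          exact hpp.ne_one (Nat.dvd_one.mp (h ▸ Nat.dvd_gcd hd dvd_rfl))
        simp [hz, hd]
      · have hg : Int.gcd (k : ℤ) p = 1 := by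
          rw [Int.gcd_natCast_natCast]
          exact Nat.coprime_comm.mp ((hpp.coprime_iff_not_dvd).mpr hd)
        rw [jacobiSym.sq_one hg]
        simp [hd]
    have hcardsplit : A.card + (P.filter (fun p => ¬ p ∣ k)).card = P.card := by
      rw [hA]; exact Finset.card_filter_add_card_filter_not (p := (· ∣ k))
    have hTval : T (k ^ 2) = ((P.filter (fun p => ¬ p ∣ k)).card : ℝ) := by
      show (∑ p ∈ P, (jacobiSym ((k ^ 2 : ℕ) : ℤ) p : ℝ)) = _
      rw [Finset.sum_congr rfl hjac, Finset.sum_ite, Finset.sum_const, Finset.sum_const]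
      simp
    have hrcard : ((P.filter (fun p => ¬ p ∣ k)).card : ℝ) = (P.card : ℝ) - (A.card : ℝ) := by
      have : ((A.card : ℝ)) + ((P.filter (fun p => ¬ p ∣ k)).card : ℝ) = (P.card : ℝ) := by
        exact_mod_cast congrArg (Nat.cast : ℕ → ℝ) hcardsplit
      linarith
    have hTge : (P.card : ℝ) / 2 ≤ T (k ^ 2) := by rw [hTval, hrcard]; linarith
    have hTnn : 0 ≤ T (k ^ 2) := le_trans (by positivity) hTge
    have hT2 : (P.card : ℝ) ^ 2 / 4 ≤ T (k ^ 2) ^ 2 := by nlinarith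
    nlinarith [hω0 (k ^ 2)]
  -- expansion of S
  have hexp : S = ∑ p ∈ P, ∑ q ∈ P, ∑ m ∈ range M,
      ω m * ((jacobiSym (m : ℤ) p : ℝ) * (jacobiSym (m : ℤ) q : ℝ)) := by
    rw [hS]
    simp_rw [hT, pow_two, Finset.sum_mul_sum, Finset.mul_sum]
    rw [Finset.sum_comm]
    exact Finset.sum_congr rfl fun p _ => Finset.sum_comm
  -- diagonal bound
  have hdiag : ∀ p ∈ P, ∑ m ∈ range M,
      ω m * ((jacobiSym (m : ℤ) p : ℝ) * (jacobiSym (m : ℤ) p : ℝ)) ≤ ∑ m ∈ range M, ω m := by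
    intro p _
    refine Finset.sum_le_sum fun m _ => ?_
    have htri := jacobiSym.trichotomy (m : ℤ) p
    have hb : (jacobiSym (m : ℤ) p : ℝ) * (jacobiSym (m : ℤ) p : ℝ) ≤ 1 := by
      rcases htri with h | h | h <;> rw [h] <;> norm_num
    nlinarith [hω0 m]
  -- off-diagonal bound
  have hoff : ∀ p ∈ P, ∀ q ∈ P.erase p, ∑ m ∈ range M,
      ω m * ((jacobiSym (m : ℤ) p : ℝ) * (jacobiSym (m : ℤ) q : ℝ))
      ≤ |∑' m : ℕ, ω m * (jacobiSym (m : ℤ) (p * q) : ℝ)| := by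
    intro p hp q hq
    have hq' := Finset.mem_of_mem_erase hq
    have hmul : ∀ m : ℕ, (jacobiSym (m : ℤ) p : ℝ) * (jacobiSym (m : ℤ) q : ℝ)
        = (jacobiSym (m : ℤ) (p * q) : ℝ) := by
      intro m
      rw [jacobiSym.mul_right' _ (hP p hp).1.ne_zero (hP q hq').1.ne_zero]
      push_cast; ring
    calc ∑ m ∈ range M, ω m * ((jacobiSym (m : ℤ) p : ℝ) * (jacobiSym (m : ℤ) q : ℝ))
        = ∑ m ∈ range M, ω m * (jacobiSym (m : ℤ) (p * q) : ℝ) := by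
          exact Finset.sum_congr rfl fun m _ => by rw [hmul]
      _ = ∑' m : ℕ, ω m * (jacobiSym (m : ℤ) (p * q) : ℝ) := (h2 _).symm
      _ ≤ _ := le_abs_self _
  -- upper bound for S
  set D : ℝ := ∑ p ∈ P, ∑ q ∈ P.erase p,
      |∑' m : ℕ, ω m * (jacobiSym (m : ℤ) (p * q) : ℝ)| with hD
  have hSle : S ≤ (P.card : ℝ) * (∑ m ∈ range M, ω m) + D := by
    rw [hexp]
    have hsplit : ∀ p ∈ P, ∑ q ∈ P, ∑ m ∈ range M,
        ω m * ((jacobiSym (m : ℤ) p : ℝ) * (jacobiSym (m : ℤ) q : ℝ))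
        = (∑ m ∈ range M, ω m * ((jacobiSym (m : ℤ) p : ℝ) * (jacobiSym (m : ℤ) p : ℝ)))
          + ∑ q ∈ P.erase p, ∑ m ∈ range M,
            ω m * ((jacobiSym (m : ℤ) p : ℝ) * (jacobiSym (m : ℤ) q : ℝ)) := by
      intro p hp
      exact (Finset.add_sum_erase P _ hp).symm
    rw [Finset.sum_congr rfl hsplit, Finset.sum_add_distrib]
    have hd1 : ∑ p ∈ P, ∑ m ∈ range M,
        ω m * ((jacobiSym (m : ℤ) p : ℝ) * (jacobiSym (m : ℤ) p : ℝ))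
        ≤ ∑ p ∈ P, ∑ m ∈ range M, ω m := Finset.sum_le_sum hdiag
    have hd2 : ∑ p ∈ P, ∑ q ∈ P.erase p, ∑ m ∈ range M,
        ω m * ((jacobiSym (m : ℤ) p : ℝ) * (jacobiSym (m : ℤ) q : ℝ)) ≤ D :=
      Finset.sum_le_sum fun p hp => Finset.sum_le_sum (hoff p hp)
    have : ∑ p ∈ P, ∑ m ∈ range M, ω m = (P.card : ℝ) * ∑ m ∈ range M, ω m := by
      rw [Finset.sum_const, nsmul_eq_mul]
    linarith
  -- lower bound for S
  have himg : ∑ k ∈ range N, ω (k ^ 2) * T (k ^ 2) ^ 2 ≤ S := by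
    rw [hS]
    have heq : ∑ k ∈ range N, ω (k ^ 2) * T (k ^ 2) ^ 2
        = ∑ m ∈ (range N).image (· ^ 2), ω m * T m ^ 2 := by
      rw [Finset.sum_image]
      intro a _ b _ h
      exact Nat.pow_left_injective (by norm_num) h
    rw [heq]
    refine Finset.sum_le_sum_of_subset_of_nonneg ?_ fun m _ _ =>
      mul_nonneg (hω0 m) (sq_nonneg _)
    intro m hm
    rw [Finset.mem_image] at hm
    obtain ⟨k, hk, rfl⟩ := hm
    rw [Finset.mem_range] at hk ⊢
    rw [hMdef]
    exact Nat.pow_lt_pow_left hk two_ne_zero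
  have hfinal : (∑ k ∈ range N, ω (k ^ 2)) * (P.card : ℝ) ^ 2 ≤ 4 * S := by
    calc (∑ k ∈ range N, ω (k ^ 2)) * (P.card : ℝ) ^ 2
        = ∑ k ∈ range N, ω (k ^ 2) * (P.card : ℝ) ^ 2 := Finset.sum_mul _ _ _
      _ ≤ ∑ k ∈ range N, 4 * (ω (k ^ 2) * T (k ^ 2) ^ 2) := Finset.sum_le_sum key
      _ = 4 * ∑ k ∈ range N, ω (k ^ 2) * T (k ^ 2) ^ 2 := (Finset.mul_sum _ _ _).symm
      _ ≤ 4 * S := by linarith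
  rw [h3, h1]
  have hstep : (∑ k ∈ range N, ω (k ^ 2)) * (P.card : ℝ) ^ 2
      ≤ 4 * ((P.card : ℝ) * (∑ m ∈ range M, ω m) + D) := by linarith
  have hrw : (4 * ((P.card : ℝ) * (∑ m ∈ range M, ω m) + D)) / (P.card : ℝ) ^ 2
      = 4 * ((1 / (P.card : ℝ)) * (∑ m ∈ range M, ω m) + (1 / (P.card : ℝ) ^ 2) * D) := by
    field_simp
  calc ∑ k ∈ range N, ω (k ^ 2)
      ≤ (4 * ((P.card : ℝ) * (∑ m ∈ range M, ω m) + D)) / (P.card : ℝ) ^ 2 := by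
        rw [le_div_iff₀ (by positivity)]; linarith
    _ = _ := hrw
end

section
/- Let n ≥ 2 be an integer, let p be an odd prime, let s ∈ 𝔽_p with s ≠ 0, and let a₁,…,a_n, b₁,…,b_n ∈ 𝔽̄_p be such that the polynomial F(X,Y) = ∏_{i=1}^n (X + a_iY + b_i) ∈ 𝔽̄_p[X,Y] is squarefree (equivalently, the n linear factors are pairwise distinct) and a_i ≠ a₁ for some i ∈ {2,…,n}. Then there exists a set A ⊆ 𝔽_p × 𝔽_p with #A ≤ n! such that for every (t,r) ∈ (𝔽_p × 𝔽_p) \ A and every k ∈ 𝔽̄_p, the polynomial F(X,Y) · F(X + s^{-1}(tY − k), Y + r) is not the square of a polynomial in 𝔽̄_p[X,Y]. -/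
open Polynomial in
lemma multisetA {α : Type*} [DecidableEq α] (s t : Multiset α) (hs : s.Nodup)
    (hc : Multiset.card s = Multiset.card t) (h : ∀ x, Even ((s + t).count x)) : s = t := by
  have hle : s ≤ t := by
    rw [Multiset.le_iff_count]
    intro x
    rcases Nat.eq_zero_or_pos (s.count x) with h0 | h0
    · omega
    · have h1 : s.count x = 1 :=
        le_antisymm (Multiset.nodup_iff_count_le_one.mp hs x) h0
      have h2 := h x
      rw [Multiset.count_add, h1] at h2
      rcases h2 with ⟨m, hm⟩
      omega
  exact Multiset.eq_of_le_of_card_le hle hc.ge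

open Polynomial in
lemma polyB {F : Type*} [Field F] {n : ℕ} (q q' : Fin n → F) (hq : Function.Injective q)
    (P : Polynomial F)
    (h : (∏ i, (X - C (q i))) * (∏ i, (X - C (q' i))) = P * P) :
    ∃ σ : Equiv.Perm (Fin n), ∀ i, q' i = q (σ i) := by
  classical
  have hne : ∀ (f : Fin n → F), (∏ i, (X - C (f i))) ≠ 0 := fun f =>
    Finset.prod_ne_zero_iff.mpr fun i _ => X_sub_C_ne_zero (f i)
  have hroots : ∀ (f : Fin n → F), (∏ i, (X - C (f i))).roots = Finset.univ.val.map f := by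
    intro f
    rw [Polynomial.roots_prod _ _ (hne f)]
    simp [Polynomial.roots_X_sub_C, Multiset.bind_singleton]
  have hP : P ≠ 0 := by
    intro h0
    rw [h0, mul_zero] at h
    exact (mul_ne_zero (hne q) (hne q')) h
  have hmul : (Finset.univ.val.map q) + (Finset.univ.val.map q')
      = P.roots + P.roots := by
    rw [← hroots q, ← hroots q', ← Polynomial.roots_mul (mul_ne_zero (hne q) (hne q')), h,
      Polynomial.roots_mul (mul_ne_zero hP hP)]
  have heq : Finset.univ.val.map q = Finset.univ.val.map q' := by
    apply multisetA _ _ (Multiset.Nodup.map hq Finset.univ.nodup) (by simp)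
    intro x
    rw [hmul, Multiset.count_add]
    exact ⟨P.roots.count x, rfl⟩
  have hq'inj : Function.Injective q' := by
    have hnd : (Finset.univ.val.map q').Nodup := heq ▸ Multiset.Nodup.map hq Finset.univ.nodup
    intro i j hij
    exact Multiset.inj_on_of_nodup_map hnd i (by simp) j (by simp) hij
  have hmem : ∀ i, ∃ j, q j = q' i := by
    intro i
    have : q' i ∈ Finset.univ.val.map q := by
      rw [heq]; exact Multiset.mem_map_of_mem _ (by simp)
    simpa using Multiset.mem_map.mp this
  choose f hf using hmem
  have hfinj : Function.Injective f := fun i j hij => hq'inj (by rw [← hf i, ← hf j, hij])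
  exact ⟨Equiv.ofBijective f ((Fintype.bijective_iff_injective_and_card f).mpr
    ⟨hfinj, rfl⟩), fun i => (hf i).symm⟩

set_option maxHeartbeats 1000000 in
set_option synthInstance.maxHeartbeats 400000 in
/-- Let `n ≥ 2`, let `p` be an odd prime, let `s ∈ 𝔽_p` with `s ≠ 0`, and let
`a_i, b_i ∈ 𝔽̄_p` be such that `F(X,Y) = ∏_{i=1}^n (X + a_iY + b_i)` is squarefree and
`a_i ≠ a₁` for some `i`. Then there is `A ⊆ 𝔽_p × 𝔽_p` with `#A ≤ n!` such that for every
`(t,r) ∉ A` and every `k ∈ 𝔽̄_p`, the polynomial `F(X,Y)·F(X + s⁻¹(tY − k), Y + r)` is not the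
square of a polynomial. -/
theorem stmt17 (n : ℕ) (hn : 2 ≤ n) (p : ℕ) [Fact p.Prime] (hp : Odd p)
    (s : ZMod p) (hs : s ≠ 0)
    (a b : Fin n → AlgebraicClosure (ZMod p))
    (hsf : Squarefree (∏ i : Fin n,
      (MvPolynomial.X 0 + MvPolynomial.C (a i) * MvPolynomial.X 1 + MvPolynomial.C (b i) :
        MvPolynomial (Fin 2) (AlgebraicClosure (ZMod p)))))
    (ha : ∃ i : Fin n, a i ≠ a ⟨0, by omega⟩) :
    ∃ A : Finset (ZMod p × ZMod p), A.card ≤ n.factorial ∧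
      ∀ t r : ZMod p, (t, r) ∉ A → ∀ k : AlgebraicClosure (ZMod p),
        ¬ IsSquare
          ((∏ i : Fin n,
              (MvPolynomial.X 0 + MvPolynomial.C (a i) * MvPolynomial.X 1 +
                MvPolynomial.C (b i))) *
            MvPolynomial.aeval
              ![MvPolynomial.X 0 +
                  MvPolynomial.C ((algebraMap (ZMod p) (AlgebraicClosure (ZMod p)) s)⁻¹) *
                    (MvPolynomial.C (algebraMap (ZMod p) (AlgebraicClosure (ZMod p)) t) *
                      MvPolynomial.X 1 - MvPolynomial.C k),
                MvPolynomial.X 1 +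
                  MvPolynomial.C (algebraMap (ZMod p) (AlgebraicClosure (ZMod p)) r)]
              (∏ i : Fin n,
                (MvPolynomial.X 0 + MvPolynomial.C (a i) * MvPolynomial.X 1 +
                  MvPolynomial.C (b i)))) := by
  classical
  let mK : ZMod p →+* (AlgebraicClosure (ZMod p)) := algebraMap (ZMod p) (AlgebraicClosure (ZMod p))
  have hmKinj : Function.Injective mK := RingHom.injective mK
  have hsK : (mK s) ≠ 0 := fun h => hs (hmKinj (by simpa using h))
  let q : (AlgebraicClosure (ZMod p)) → (AlgebraicClosure (ZMod p)) → (Polynomial (AlgebraicClosure (ZMod p))) := fun c d => Polynomial.C c * Polynomial.X + Polynomial.C d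
  let f : (AlgebraicClosure (ZMod p)) → (AlgebraicClosure (ZMod p)) → (FractionRing (Polynomial (AlgebraicClosure (ZMod p)))) := fun c d => -(algebraMap (Polynomial (AlgebraicClosure (ZMod p))) (FractionRing (Polynomial (AlgebraicClosure (ZMod p)))) (q c d))
  have hfr : Function.Injective (algebraMap (Polynomial (AlgebraicClosure (ZMod p))) (FractionRing (Polynomial (AlgebraicClosure (ZMod p))))) := IsFractionRing.injective (Polynomial (AlgebraicClosure (ZMod p))) (FractionRing (Polynomial (AlgebraicClosure (ZMod p))))
  have hqinj : ∀ c d c' d', q c d = q c' d' → c = c' ∧ d = d' := by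
    intro c d c' d' h
    have h0 := congrArg (Polynomial.eval (0 : (AlgebraicClosure (ZMod p)))) h
    have h1 := congrArg (Polynomial.eval (1 : (AlgebraicClosure (ZMod p)))) h
    simp only [q, Polynomial.eval_add, Polynomial.eval_mul, Polynomial.eval_C,
      Polynomial.eval_X, mul_zero, mul_one, zero_add] at h0 h1
    exact ⟨by linear_combination h1 - h0, h0⟩
  let yy : (FractionRing (Polynomial (AlgebraicClosure (ZMod p)))) := algebraMap (Polynomial (AlgebraicClosure (ZMod p))) (FractionRing (Polynomial (AlgebraicClosure (ZMod p)))) Polynomial.X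
  let cf : (AlgebraicClosure (ZMod p)) →+* (FractionRing (Polynomial (AlgebraicClosure (ZMod p)))) := (algebraMap (Polynomial (AlgebraicClosure (ZMod p))) (FractionRing (Polynomial (AlgebraicClosure (ZMod p))))).comp (Polynomial.C)
  -- ring homs to Polynomial (FractionRing (Polynomial (AlgebraicClosure (ZMod p))))
  let ψK : MvPolynomial ℕ (AlgebraicClosure (ZMod p)) →+* Polynomial (FractionRing (Polynomial (AlgebraicClosure (ZMod p)))) :=
    MvPolynomial.eval₂Hom (Polynomial.C.comp cf)
      (fun i => if i = 0 then Polynomial.X else if i = 1 then Polynomial.C yy else 0)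
  let ψ2 : MvPolynomial (Fin 2) (AlgebraicClosure (ZMod p)) →+* Polynomial (FractionRing (Polynomial (AlgebraicClosure (ZMod p)))) :=
    MvPolynomial.eval₂Hom (Polynomial.C.comp cf)
      (fun i => if i = 0 then Polynomial.X else Polynomial.C yy)
  have hfacK : ∀ c d : (AlgebraicClosure (ZMod p)),
      ψK (MvPolynomial.X 0 + MvPolynomial.C c * MvPolynomial.X 1 + MvPolynomial.C d)
      = Polynomial.X - Polynomial.C (f c d) := by
    intro c d
    simp only [ψK, map_add, map_mul, MvPolynomial.eval₂Hom_X', MvPolynomial.eval₂Hom_C,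
      if_pos, if_neg one_ne_zero, f, q, map_neg, RingHom.coe_comp, Function.comp_apply, cf, yy]
    ring
  have hfac2 : ∀ c d : (AlgebraicClosure (ZMod p)),
      ψ2 (MvPolynomial.X 0 + MvPolynomial.C c * MvPolynomial.X 1 + MvPolynomial.C d)
      = Polynomial.X - Polynomial.C (f c d) := by
    intro c d
    have h01 : (1 : Fin 2) ≠ 0 := by decide
    simp only [ψ2, map_add, map_mul, MvPolynomial.eval₂Hom_X', MvPolynomial.eval₂Hom_C,
      if_pos, if_neg h01, f, q, map_neg, RingHom.coe_comp, Function.comp_apply, cf, yy]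
    ring
  let F : Fin n → MvPolynomial ℕ (AlgebraicClosure (ZMod p)) := fun i =>
    MvPolynomial.X 0 + MvPolynomial.C (a i) * MvPolynomial.X 1 + MvPolynomial.C (b i)
  let F2 : Fin n → MvPolynomial (Fin 2) (AlgebraicClosure (ZMod p)) := fun i =>
    MvPolynomial.X 0 + MvPolynomial.C (a i) * MvPolynomial.X 1 + MvPolynomial.C (b i)
  have hpair : Function.Injective (fun i : Fin n => (a i, b i)) := by
    intro i j hij
    by_contra hne
    simp only [Prod.mk.injEq] at hij
    have hj : j ∈ Finset.univ.erase i := Finset.mem_erase.mpr ⟨fun h => hne h.symm, Finset.mem_univ j⟩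
    have hdvd : F2 i * F2 i ∣ ∏ m, F2 m := by
      rw [← Finset.mul_prod_erase _ F2 (Finset.mem_univ i), ← Finset.mul_prod_erase _ F2 hj]
      have hFeq : F2 j = F2 i := by simp only [F2, hij.1, hij.2]
      rw [hFeq, ← mul_assoc]
      exact Dvd.intro _ rfl
    have hunit := (hsf (F2 i) hdvd).map ψ2
    rw [show ψ2 (F2 i) = _ from hfac2 (a i) (b i)] at hunit
    exact Polynomial.not_isUnit_X_sub_C _ hunit
  have hfinj : Function.Injective (fun i : Fin n => f (a i) (b i)) := by
    intro i j hij
    have hq2 : q (a i) (b i) = q (a j) (b j) := hfr (neg_injective hij)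
    obtain ⟨h1, h2⟩ := hqinj _ _ _ _ hq2
    exact hpair (Prod.ext h1 h2)
  let v : ZMod p → ZMod p → (AlgebraicClosure (ZMod p)) → (Fin 2 → MvPolynomial ℕ (AlgebraicClosure (ZMod p))) := fun t r k =>
    ![MvPolynomial.X 0 + MvPolynomial.C ((mK s)⁻¹) *
        (MvPolynomial.C (mK t) * MvPolynomial.X 1 - MvPolynomial.C k),
      MvPolynomial.X 1 + MvPolynomial.C (mK r)]
  have key : ∀ (t r : ZMod p) (k : (AlgebraicClosure (ZMod p))),
      IsSquare ((∏ i, F i) * MvPolynomial.aeval (v t r k) (∏ i, F2 i)) →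
      ∃ σ : Equiv.Perm (Fin n), ∀ i,
        a (σ i) = a i + (mK s)⁻¹ * mK t ∧ b (σ i) = b i + a i * mK r - (mK s)⁻¹ * k := by
    intro t r k hsq
    obtain ⟨c, hc⟩ := hsq
    set a' : Fin n → (AlgebraicClosure (ZMod p)) := fun i => a i + (mK s)⁻¹ * mK t with ha'def
    set b' : Fin n → (AlgebraicClosure (ZMod p)) := fun i => b i + a i * mK r - (mK s)⁻¹ * k with hb'def
    have haev : (MvPolynomial.aeval (v t r k) (∏ i, F2 i))
        = ∏ i, (MvPolynomial.X 0 + MvPolynomial.C (a' i) * MvPolynomial.X 1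
            + MvPolynomial.C (b' i) : MvPolynomial ℕ (AlgebraicClosure (ZMod p))) := by
      rw [map_prod]
      refine Finset.prod_congr rfl fun i _ => ?_
      simp only [F2, v, ha'def, hb'def, map_add, map_mul, map_sub, MvPolynomial.aeval_X,
        MvPolynomial.aeval_C, Matrix.cons_val_zero, Matrix.cons_val_one, Matrix.head_cons,
        MvPolynomial.algebraMap_eq]
      ring
    rw [haev] at hc
    have hc2 := congrArg ψK hc
    simp only [map_mul, map_prod] at hc2
    rw [show (∏ i, ψK (F i)) = ∏ i, (Polynomial.X - Polynomial.C (f (a i) (b i))) from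
        Finset.prod_congr rfl fun i _ => hfacK (a i) (b i),
      show (∏ i, ψK (MvPolynomial.X 0 + MvPolynomial.C (a' i) * MvPolynomial.X 1
              + MvPolynomial.C (b' i)))
          = ∏ i, (Polynomial.X - Polynomial.C (f (a' i) (b' i))) from
        Finset.prod_congr rfl fun i _ => hfacK (a' i) (b' i)] at hc2
    obtain ⟨σ, hσ⟩ := polyB (fun i => f (a i) (b i)) (fun i => f (a' i) (b' i)) hfinj _ hc2
    refine ⟨σ, fun i => ?_⟩
    have hq2 : q (a' i) (b' i) = q (a (σ i)) (b (σ i)) := hfr (neg_injective (hσ i))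
    obtain ⟨h1, h2⟩ := hqinj _ _ _ _ hq2
    exact ⟨h1.symm, h2.symm⟩
  let Bad : Equiv.Perm (Fin n) → ZMod p × ZMod p → Prop := fun σ u =>
    ∃ k : (AlgebraicClosure (ZMod p)), ∀ i, a (σ i) = a i + (mK s)⁻¹ * mK u.1
      ∧ b (σ i) = b i + a i * mK u.2 - (mK s)⁻¹ * k
  have huniq : ∀ σ u v, Bad σ u → Bad σ v → u = v := by
    intro σ u v ⟨k1, h1⟩ ⟨k2, h2⟩
    obtain ⟨i0, hi0⟩ := ha
    set z : Fin n := ⟨0, by omega⟩ with hzdef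
    have hsinv : (mK s)⁻¹ ≠ 0 := inv_ne_zero hsK
    have ht : u.1 = v.1 := by
      have h0 := (h1 z).1.symm.trans (h2 z).1
      have h4 : (mK s)⁻¹ * mK u.1 = (mK s)⁻¹ * mK v.1 := by linear_combination h0
      exact hmKinj (mul_left_cancel₀ hsinv h4)
    have hr : u.2 = v.2 := by
      have hzz : (a i0 - a z) ≠ 0 := sub_ne_zero.mpr hi0
      have h3 : (a i0 - a z) * mK u.2 = (a i0 - a z) * mK v.2 := by
        linear_combination (h2 i0).2 - (h2 z).2 - (h1 i0).2 + (h1 z).2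
      exact hmKinj (mul_left_cancel₀ hzz h3)
    exact Prod.ext ht hr
  let g : Equiv.Perm (Fin n) → ZMod p × ZMod p := fun σ =>
    if h : ∃ u, Bad σ u then h.choose else (0, 0)
  refine ⟨Finset.image g Finset.univ, ?_, ?_⟩
  · calc (Finset.image g Finset.univ).card ≤ Finset.univ.card := Finset.card_image_le
      _ = n.factorial := by simp [Fintype.card_perm]
  · intro t r hA k hsq
    replace hsq : IsSquare ((∏ i, F i) * MvPolynomial.aeval (v t r k) (∏ i, F2 i)) := hsq
    obtain ⟨σ, hσ⟩ := key t r k hsq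
    have hbad : Bad σ (t, r) := ⟨k, hσ⟩
    have hex : ∃ u, Bad σ u := ⟨_, hbad⟩
    apply hA
    rw [Finset.mem_image]
    refine ⟨σ, Finset.mem_univ σ, ?_⟩
    show (if h : ∃ u, Bad σ u then h.choose else (0, 0)) = (t, r)
    rw [dif_pos hex]
    exact huniq σ _ _ hex.choose_spec hbad
end
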